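/- Assume in addition that for every y ∈ ℝ the function v ↦ A(y,v) is convex. Let λ ∈ (0,1), let c₁, c₂, c ∈ ℝ, and let v₁, v₂, u : ℝ → ℝ be continuously differentiable 1-periodic functions with v₁'(x) = A(x,v₁(x)) − c₁, v₂'(x) = A(x,v₂(x)) − c₂, and u'(x) = A(x,u(x)) − c for all x ∈ ℝ, such that ∫₀¹ u = λ ∫₀¹ v₁ + (1−λ) ∫₀¹ v₂. Then c ≤ λ c₁ + (1−λ) c₂. If moreover v ↦ A(y,v) is strictly convex for every y and ∫₀¹ v₁ ≠ ∫₀¹ v₂, then c < λ c₁ + (1−λ) c₂. (In particular the homogenized flux Ā, defined by Ā(p) = the constant c of the periodic stationary solution with mean p, is convex, and strictly convex when A is strictly convex in its second variable.) -/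

import Mathlib

/-!
Put `w = λ v₁ + (1 - λ) v₂`, `z = w - u` (periodic with mean zero) and `c̄ = λ c₁ + (1 - λ) c₂`.
By Hadamard's lemma `A(x, w) - A(x, u) = b z` with `b` continuous, so `z' = b z + h` where
`h = λ A(·, v₁) + (1 - λ) A(·, v₂) - A(·, w) + (c - c̄)`; convexity makes `h - (c - c̄) ≥ 0`.
If `c̄ ≤ c` then `h ≥ 0`, and with `B' = b` the function `z e^{-B}` is monotone, its derivative
being `h e^{-B}`. It vanishes at all integer translates of a zero of `z`, hence identically, so
`h = 0`. This contradicts `c̄ < c`, and under strict convexity it contradicts `v₁ ≠ v₂` somewhere.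
-/

open MeasureTheory Set Function

lemma Monotone.eq_zero_of_periodic_zeros {g : ℝ → ℝ} (hg : Monotone g) {T : ℝ} (hT : 0 < T)
    (x₀ : ℝ) (hzero : ∀ n : ℤ, g (x₀ + n * T) = 0) : g = 0 := by
  funext x
  set n := ⌊(x - x₀) / T⌋
  have hlo : x₀ + n * T ≤ x := by
    have := Int.floor_le ((x - x₀) / T)
    rw [le_div_iff₀ hT] at this
    linarith
  have hhi : x ≤ x₀ + ((n + 1 : ℤ) : ℝ) * T := by
    have := (Int.lt_floor_add_one ((x - x₀) / T)).le
    rw [div_le_iff₀ hT] at this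
    push_cast
    linarith
  exact le_antisymm ((hg hhi).trans_eq (hzero _)) ((hzero n).symm.trans_le (hg hlo))

lemma hasDerivAt_mul_exp_neg {z b B h : ℝ → ℝ} {x : ℝ}
    (hz : HasDerivAt z (b x * z x + h x) x) (hB : HasDerivAt B (b x) x) :
    HasDerivAt (fun y => z y * Real.exp (-B y)) (h x * Real.exp (-B x)) x :=
  (hz.mul hB.neg.exp).congr_deriv (by simp only [Pi.neg_apply]; ring)

theorem eq_zero_of_periodic_of_hasDerivAt_linear {z b h : ℝ → ℝ} {T : ℝ} (hT : 0 < T)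
    (hzper : Periodic z T) (hmean : ∫ x in (0 : ℝ)..T, z x = 0) (hb : Continuous b)
    (hz : ∀ x, HasDerivAt z (b x * z x + h x) x) (hh : 0 ≤ h) : h = 0 := by
  set B : ℝ → ℝ := fun x => ∫ s in (0 : ℝ)..x, b s
  have hB : ∀ x, HasDerivAt B (b x) x := fun x =>
    intervalIntegral.integral_hasDerivAt_right (hb.intervalIntegrable _ _)
      (hb.stronglyMeasurableAtFilter _ _) hb.continuousAt
  have hg := fun x => hasDerivAt_mul_exp_neg (hz x) (hB x)
  have hmono : Monotone fun x => z x * Real.exp (-B x) :=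
    monotone_of_deriv_nonneg (fun x => (hg x).differentiableAt) fun x => by
      rw [(hg x).deriv]
      exact mul_nonneg (hh x) (Real.exp_pos _).le
  have hzc : Continuous z := continuous_iff_continuousAt.2 fun x => (hz x).continuousAt
  obtain ⟨x₀, -, hx₀⟩ := exists_eq_interval_average hT.ne hzc.continuousOn
  have hz₀ : z x₀ = 0 := by
    rw [hx₀, interval_average_eq_div, hmean, zero_div]
  have hzero := hmono.eq_zero_of_periodic_zeros hT x₀ fun n => by
    rw [hzper.int_mul n x₀, hz₀, zero_mul]
  funext x
  have := (hg x).unique (by rw [hzero]; exact hasDerivAt_const x 0)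
  simpa [(Real.exp_pos _).ne'] using this

noncomputable def partialDerivSnd (A : ℝ → ℝ → ℝ) (x v : ℝ) : ℝ :=
  fderiv ℝ (uncurry A) (x, v) (0, 1)

lemma continuous_partialDerivSnd {A : ℝ → ℝ → ℝ} (hA : ContDiff ℝ 1 (uncurry A)) :
    Continuous (uncurry (partialDerivSnd A)) :=
  (hA.continuous_fderiv one_ne_zero).clm_apply continuous_const

lemma hasDerivAt_partialDerivSnd {A : ℝ → ℝ → ℝ} (hA : ContDiff ℝ 1 (uncurry A)) (x v : ℝ) :
    HasDerivAt (A x) (partialDerivSnd A x v) v :=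
  (hA.differentiable one_ne_zero (x, v)).hasFDerivAt.comp_hasDerivAt v
    ((hasDerivAt_const v x).prodMk (hasDerivAt_id v))

lemma sub_eq_integral_partialDerivSnd_mul {A : ℝ → ℝ → ℝ} (hA : ContDiff ℝ 1 (uncurry A))
    (x u w : ℝ) :
    A x w - A x u = (∫ t in (0 : ℝ)..1, partialDerivSnd A x (u + t * (w - u))) * (w - u) := by
  have hline : ∀ t, HasDerivAt (fun t => u + t * (w - u)) (w - u) t := fun t => by
    simpa using ((hasDerivAt_id t).mul_const (w - u)).const_add u
  have hderiv : ∀ t ∈ uIcc (0 : ℝ) 1, HasDerivAt (fun t => A x (u + t * (w - u)))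
      (partialDerivSnd A x (u + t * (w - u)) * (w - u)) t := fun t _ =>
    (hasDerivAt_partialDerivSnd hA x _).comp t (hline t)
  have hcont : Continuous fun t => partialDerivSnd A x (u + t * (w - u)) * (w - u) :=
    ((continuous_partialDerivSnd hA).comp (by fun_prop : Continuous fun t : ℝ =>
      (x, u + t * (w - u)))).mul continuous_const
  rw [← intervalIntegral.integral_mul_const,
    intervalIntegral.integral_eq_sub_of_hasDerivAt hderiv (hcont.intervalIntegrable _ _)]
  simp

lemma continuous_integral_partialDerivSnd {A : ℝ → ℝ → ℝ} (hA : ContDiff ℝ 1 (uncurry A))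
    {u w : ℝ → ℝ} (hu : Continuous u) (hw : Continuous w) :
    Continuous fun x => ∫ t in (0 : ℝ)..1, partialDerivSnd A x (u x + t * (w x - u x)) :=
  intervalIntegral.continuous_parametric_intervalIntegral_of_continuous' (f := fun x t =>
      partialDerivSnd A x (u x + t * (w x - u x)))
    ((continuous_partialDerivSnd hA).comp (by fun_prop : Continuous fun p : ℝ × ℝ =>
      (p.1, u p.1 + p.2 * (w p.1 - u p.1)))) 0 1

lemma exists_continuous_hasDerivAt_sub_eq_mul_add {A : ℝ → ℝ → ℝ}
    (hA : ContDiff ℝ 1 (uncurry A)) {w w' u : ℝ → ℝ} {c : ℝ} (hw : ∀ x, HasDerivAt w (w' x) x)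
    (hu : ∀ x, HasDerivAt u (A x (u x) - c) x) :
    ∃ b : ℝ → ℝ, Continuous b ∧ ∀ x, HasDerivAt (fun x => w x - u x)
      (b x * (w x - u x) + (w' x - A x (w x) + c)) x := by
  have hcont {f f' : ℝ → ℝ} (hf : ∀ x, HasDerivAt f (f' x) x) : Continuous f :=
    continuous_iff_continuousAt.2 fun x => (hf x).continuousAt
  refine ⟨_, continuous_integral_partialDerivSnd hA (hcont hu) (hcont hw), fun x =>
    ((hw x).sub (hu x)).congr_deriv ?_⟩
  linarith [sub_eq_integral_partialDerivSnd_mul hA x (u x) (w x)]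

lemma ContDiff.hasDerivAt_of_deriv_eq {f f' : ℝ → ℝ} (hf : ContDiff ℝ 1 f)
    (hderiv : ∀ x, deriv f x = f' x) (x : ℝ) : HasDerivAt f (f' x) x :=
  hderiv x ▸ (hf.differentiable one_ne_zero x).hasDerivAt

theorem homogenized_flux_convex_general
    (A : ℝ → ℝ → ℝ)
    (hA : ContDiff ℝ 1 (Function.uncurry A))
    (hconv : ∀ y, ConvexOn ℝ Set.univ (fun v => A y v))
    (lam : ℝ) (hlam : lam ∈ Set.Ioo (0:ℝ) 1)
    (c₁ c₂ c : ℝ) (v₁ v₂ u : ℝ → ℝ)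
    (hv₁ : ContDiff ℝ 1 v₁) (hv₁per : ∀ x, v₁ (x + 1) = v₁ x)
    (hv₁ode : ∀ x, deriv v₁ x = A x (v₁ x) - c₁)
    (hv₂ : ContDiff ℝ 1 v₂) (hv₂per : ∀ x, v₂ (x + 1) = v₂ x)
    (hv₂ode : ∀ x, deriv v₂ x = A x (v₂ x) - c₂)
    (hu : ContDiff ℝ 1 u) (huper : ∀ x, u (x + 1) = u x)
    (huode : ∀ x, deriv u x = A x (u x) - c)
    (hmean : (∫ y in (0:ℝ)..1, u y)
      = lam * (∫ y in (0:ℝ)..1, v₁ y) + (1 - lam) * ∫ y in (0:ℝ)..1, v₂ y) :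
    c ≤ lam * c₁ + (1 - lam) * c₂ ∧
    ((∀ y, StrictConvexOn ℝ Set.univ (fun v => A y v)) →
      (∫ y in (0:ℝ)..1, v₁ y) ≠ (∫ y in (0:ℝ)..1, v₂ y) →
      c < lam * c₁ + (1 - lam) * c₂) := by
  obtain ⟨hlam₀, hlam₁⟩ := hlam
  set w : ℝ → ℝ := fun x => lam * v₁ x + (1 - lam) * v₂ x
  set δ : ℝ → ℝ := fun x => lam * A x (v₁ x) + (1 - lam) * A x (v₂ x) - A x (w x)
  set cbar := lam * c₁ + (1 - lam) * c₂
  have hδ (x : ℝ) : 0 ≤ δ x := sub_nonneg.2 <| by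
    simpa using (hconv x).2 (mem_univ (v₁ x)) (mem_univ (v₂ x)) hlam₀.le (by linarith) (by ring)
  obtain ⟨b, hb, hz⟩ := exists_continuous_hasDerivAt_sub_eq_mul_add hA (w := w)
    (fun x => ((hv₁.hasDerivAt_of_deriv_eq hv₁ode x).const_mul lam).add
      ((hv₂.hasDerivAt_of_deriv_eq hv₂ode x).const_mul (1 - lam)))
    (hu.hasDerivAt_of_deriv_eq huode)
  have hzper : Periodic (fun x => w x - u x) 1 := fun x => by
    simp only [w, hv₁per, hv₂per, huper]
  have hzmean : ∫ x in (0 : ℝ)..1, (w x - u x) = 0 := by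
    rw [intervalIntegral.integral_sub, intervalIntegral.integral_add,
      intervalIntegral.integral_const_mul, intervalIntegral.integral_const_mul, hmean, sub_self]
    all_goals
      have := hv₁.continuous; have := hv₂.continuous; have := hu.continuous
      exact Continuous.intervalIntegrable (by fun_prop) _ _
  have key (hc : cbar ≤ c) (x : ℝ) : δ x + (c - cbar) = 0 := by
    refine congrFun (eq_zero_of_periodic_of_hasDerivAt_linear one_pos hzper hzmean hb
      (fun x => (hz x).congr_deriv ?_) fun x => add_nonneg (hδ x) (sub_nonneg.2 hc)) x
    simp only [δ, cbar]
    ring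
  refine ⟨not_lt.1 fun hc => ?_, fun hstrict hne => lt_of_not_ge fun hc => ?_⟩
  · linarith [key hc.le 0, hδ 0]
  · obtain ⟨x₁, hx₁⟩ : ∃ x, v₁ x ≠ v₂ x := by
      by_contra! hall
      exact hne (intervalIntegral.integral_congr fun x _ => hall x)
    have hδpos : 0 < δ x₁ := sub_pos.2 <| by
      simpa using (hstrict x₁).2 (mem_univ _) (mem_univ _) hx₁ hlam₀ (by linarith) (by ring)
    linarith [key hc x₁]

/-- convexity of the homogenized flux.  If `A(y,·)` is convex for
every `y` and `u`, `v₁`, `v₂` are periodic stationary solutions with constants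
`c`, `c₁`, `c₂` whose means satisfy `⟨u⟩ = λ⟨v₁⟩ + (1−λ)⟨v₂⟩`, then
`c ≤ λc₁ + (1−λ)c₂`; with strict inequality if `A(y,·)` is strictly convex and
`⟨v₁⟩ ≠ ⟨v₂⟩`. -/
theorem homogenized_flux_convex
    (A : ℝ → ℝ → ℝ)
    (hA : ContDiff ℝ 1 (Function.uncurry A))
    (hper : ∀ y v, A (y + 1) v = A y v)
    (hconv : ∀ y, ConvexOn ℝ Set.univ (fun v => A y v))
    (lam : ℝ) (hlam : lam ∈ Set.Ioo (0:ℝ) 1)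
    (c₁ c₂ c : ℝ) (v₁ v₂ u : ℝ → ℝ)
    (hv₁ : ContDiff ℝ 1 v₁) (hv₁per : ∀ x, v₁ (x + 1) = v₁ x)
    (hv₁ode : ∀ x, deriv v₁ x = A x (v₁ x) - c₁)
    (hv₂ : ContDiff ℝ 1 v₂) (hv₂per : ∀ x, v₂ (x + 1) = v₂ x)
    (hv₂ode : ∀ x, deriv v₂ x = A x (v₂ x) - c₂)
    (hu : ContDiff ℝ 1 u) (huper : ∀ x, u (x + 1) = u x)
    (huode : ∀ x, deriv u x = A x (u x) - c)
    (hmean : (∫ y in (0:ℝ)..1, u y)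
      = lam * (∫ y in (0:ℝ)..1, v₁ y) + (1 - lam) * ∫ y in (0:ℝ)..1, v₂ y) :
    c ≤ lam * c₁ + (1 - lam) * c₂ ∧
    ((∀ y, StrictConvexOn ℝ Set.univ (fun v => A y v)) →
      (∫ y in (0:ℝ)..1, v₁ y) ≠ (∫ y in (0:ℝ)..1, v₂ y) →
      c < lam * c₁ + (1 - lam) * c₂) :=
  homogenized_flux_convex_general A hA hconv lam hlam c₁ c₂ c v₁ v₂ u hv₁ hv₁per hv₁ode hv₂ hv₂per
    hv₂ode hu huper huode hmean
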